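/- arXiv:2205.03185 — 4 statements merged into one kernel-verified Lean document; each statement's English description precedes it below -/
import Mathlib

section
/- Let R be a ring and F an injective left R-module. Let A ∈ R^{l'×l}, let B ∈ R^{l×l''} be a right nullspace of A, and let A' ∈ R^{l'''×l} be a left nullspace of B. Then the solution set Sol_F(A') equals the image B F^{l''×1}; that is, B parametrizes Sol_F(A'). -/
/-- Action of a matrix over `R` on column vectors with entries in a left `R`-module `F`. -/
def matVec {R : Type} [Ring R] {F : Type} [AddCommGroup F] [Module R F]
    {p q : ℕ} (A : Matrix (Fin p) (Fin q) R) (f : Fin q → F) : Fin p → F :=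
  fun i => ∑ j, A i j • f j

/-- The solution set `Sol_F(A) = {f ∈ F^{l×1} | A f = 0}`. -/
def solSet {R : Type} [Ring R] {F : Type} [AddCommGroup F] [Module R F]
    {p q : ℕ} (A : Matrix (Fin p) (Fin q) R) : Set (Fin q → F) :=
  {f | matVec A f = 0}

/-- The image `B F^{m×1}` of a matrix `B` over `R`. -/
def matImage {R : Type} [Ring R] {F : Type} [AddCommGroup F] [Module R F]
    {q m : ℕ} (B : Matrix (Fin q) (Fin m) R) : Set (Fin q → F) :=
  {f | ∃ g : Fin m → F, f = matVec B g}

/-- `w ↦ ∑ i, w i • f i` as a linear map. -/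
def colComb {R : Type} [Ring R] {F : Type} [AddCommGroup F] [Module R F]
    {q : ℕ} (f : Fin q → F) : (Fin q → R) →ₗ[R] F where
  toFun w := ∑ i, w i • f i
  map_add' w₁ w₂ := by simp [add_smul, Finset.sum_add_distrib]
  map_smul' r w := by simp [mul_smul, Finset.smul_sum]

theorem parametrization_of_sol_of_left_nullspace
    {R : Type} [Ring R] {F : Type} [AddCommGroup F] [Module R F]
    (hF : Module.Injective R F)
    {l' l l'' l''' : ℕ}
    (A : Matrix (Fin l') (Fin l) R)
    (B : Matrix (Fin l) (Fin l'') R)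
    (A' : Matrix (Fin l''') (Fin l) R)
    -- B is a right nullspace of A
    (hAB : A * B = 0)
    (hBker : ∀ v : Fin l → R, A.mulVec v = 0 → ∃ c : Fin l'' → R, v = B.mulVec c)
    -- A' is a left nullspace of B
    (hA'B : A' * B = 0)
    (hA'ker : ∀ w : Fin l → R, Matrix.vecMul w B = 0 →
      ∃ u : Fin l''' → R, w = Matrix.vecMul u A') :
    solSet (F := F) A' = matImage (F := F) B := by
  ext f
  constructor
  · intro (hf : matVec A' f = 0)
    -- ρ : w ↦ w ᵥ* B
    set ρ : (Fin l → R) →ₗ[R] (Fin l'' → R) := B.vecMulLinear with hρ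
    set T : (Fin l → R) →ₗ[R] F := colComb f with hT
    -- T kills ker ρ
    have hker : LinearMap.ker ρ ≤ LinearMap.ker T := by
      intro w hw
      obtain ⟨u, hu⟩ := hA'ker w (by rw [LinearMap.mem_ker] at hw; exact hw)
      have : T w = ∑ k, u k • (matVec A' f k) := by
        simp only [hT, colComb, LinearMap.coe_mk, AddHom.coe_mk, hu, matVec,
          Matrix.vecMul, dotProduct, Finset.smul_sum, Finset.sum_smul,
          mul_smul]
        exact Finset.sum_comm
      simp [LinearMap.mem_ker, this, hf]
    -- descend T to the range of ρ
    let S : LinearMap.range ρ →ₗ[R] F :=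
      ((LinearMap.ker ρ).liftQ T hker).comp (LinearMap.quotKerEquivRange ρ).symm.toLinearMap
    have hS : ∀ w : Fin l → R, S ⟨ρ w, LinearMap.mem_range_self ρ w⟩ = T w := by
      intro w
      have h1 : (LinearMap.quotKerEquivRange ρ).symm ⟨ρ w, LinearMap.mem_range_self ρ w⟩
          = Submodule.Quotient.mk w := by
        apply (LinearMap.quotKerEquivRange ρ).injective
        simp [LinearMap.quotKerEquivRange_apply_mk]
      simp [S, h1]
    obtain ⟨S', hS'⟩ := hF.out (LinearMap.range ρ).subtype
      (Submodule.injective_subtype _) S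
    refine ⟨fun j => S' (Pi.single j 1), ?_⟩
    funext i
    have h2 : f i = T (Pi.single i 1) := by
      simp [hT, colComb, Pi.single_apply, ite_smul]
    have h3 : ρ (Pi.single i 1) = ∑ j, B i j • (Pi.single j 1 : Fin l'' → R) := by
      funext j
      simp [hρ, Matrix.vecMul, dotProduct, Pi.single_apply, ite_mul,
        Finset.sum_apply, mul_ite]
    calc f i = S' (ρ (Pi.single i 1)) := by
          rw [h2, ← hS (Pi.single i 1)]
          exact (hS' _).symm
      _ = ∑ j, B i j • S' (Pi.single j 1) := by rw [h3]; simp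
      _ = matVec B (fun j => S' (Pi.single j 1)) i := rfl
  · rintro ⟨g, rfl⟩
    show matVec A' (matVec B g) = 0
    funext k
    have : ∑ i, A' k i • ∑ j, B i j • g j = ∑ j, (A' * B) k j • g j := by
      simp only [Finset.smul_sum, Matrix.mul_apply, Finset.sum_smul, mul_smul]
      rw [Finset.sum_comm]
    simp [matVec, this, hA'B]
end

section
/- Let R be a ring and F an injective left R-module that is also a cogenerator. Let A ∈ R^{l'×l}, let B ∈ R^{l×l''} be a right nullspace of A, and let A' ∈ R^{l'''×l} be a left nullspace of B. Then Sol_F(A') ⊆ Sol_F(A), and Sol_F(A') is the largest parametrizable subset of Sol_F(A): for every m and every matrix B̃ ∈ R^{l×m} whose image B̃ F^{m×1} is contained in Sol_F(A), one has B̃ F^{m×1} ⊆ Sol_F(A'). -/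
def Module.IsCogenerator (R F : Type) [Ring R] [AddCommGroup F] [Module R F] : Prop :=
  ∀ (M : Type) [AddCommGroup M] [Module R M], (∃ m : M, m ≠ 0) → ∃ φ : M →ₗ[R] F, φ ≠ 0

section

variable {R : Type} [Ring R] {F : Type} [AddCommGroup F] [Module R F]

-- A nonzero map on `R ∙ x` is nonzero at the generator `x`; extend it by injectivity.
theorem Module.Injective.exists_apply_ne_zero (hF : Module.Injective R F)
    (hcogen : Module.IsCogenerator R F) {M : Type} [AddCommGroup M] [Module R M] {x : M}
    (hx : x ≠ 0) : ∃ φ : M →ₗ[R] F, φ x ≠ 0 := by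
  set N := R ∙ x
  have hxN : x ∈ N := Submodule.mem_span_singleton_self x
  obtain ⟨φ₀, hφ₀⟩ := hcogen N ⟨⟨x, hxN⟩, by simpa using hx⟩
  have hφ₀x : φ₀ ⟨x, hxN⟩ ≠ 0 := by
    refine fun h => hφ₀ (LinearMap.ext_on Submodule.span_span_coe_preimage ?_)
    rintro ⟨y, hy⟩ (rfl : y = x)
    exact h
  obtain ⟨φ, hφ⟩ := hF.out N.subtype N.injective_subtype φ₀
  exact ⟨φ, (hφ ⟨x, hxN⟩).symm ▸ hφ₀x⟩

theorem matVec_matVec {p q r : ℕ} (A : Matrix (Fin p) (Fin q) R)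
    (B : Matrix (Fin q) (Fin r) R) (g : Fin r → F) :
    matVec A (matVec B g) = matVec (A * B) g := by
  funext i
  simp only [matVec, Matrix.mul_apply, Finset.smul_sum, Finset.sum_smul, smul_smul]
  exact Finset.sum_comm

theorem solSet_subset_solSet_mul {p q r : ℕ} (U : Matrix (Fin p) (Fin q) R)
    (A : Matrix (Fin q) (Fin r) R) : solSet (F := F) A ⊆ solSet (F := F) (U * A) := by
  intro f hf
  simp only [solSet, Set.mem_ofPred_eq, ← matVec_matVec] at hf ⊢
  rw [hf]
  funext i
  simp [matVec]

theorem matImage_subset_solSet_of_mul_eq_zero {p q r : ℕ} {A : Matrix (Fin p) (Fin q) R}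
    {B : Matrix (Fin q) (Fin r) R} (hAB : A * B = 0) :
    matImage (F := F) B ⊆ solSet (F := F) A := by
  rintro _ ⟨g, rfl⟩
  simp only [solSet, Set.mem_ofPred_eq, matVec_matVec, hAB]
  funext i
  simp [matVec]

-- Evaluate `A B` on `j ↦ φ eⱼ`, where `φ : R^r → F` does not vanish on a row of `A B`.
theorem mul_eq_zero_of_matImage_subset_solSet (hF : Module.Injective R F)
    (hcogen : Module.IsCogenerator R F) {p q r : ℕ} {A : Matrix (Fin p) (Fin q) R}
    {B : Matrix (Fin q) (Fin r) R} (h : matImage (F := F) B ⊆ solSet (F := F) A) :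
    A * B = 0 := by
  funext i
  by_contra hi
  obtain ⟨φ, hφ⟩ := hF.exists_apply_ne_zero hcogen hi
  have hsol : matVec (A * B) (fun j => φ fun k => if j = k then 1 else 0) = 0 := by
    rw [← matVec_matVec]
    exact h ⟨_, rfl⟩
  apply hφ
  rw [φ.pi_apply_eq_sum_univ]
  exact congrFun hsol i

end

namespace Matrix

variable {R : Type} [Ring R] {p q r s : ℕ}

theorem exists_eq_mul_of_mulVec_ker {A : Matrix (Fin p) (Fin q) R}
    {B : Matrix (Fin q) (Fin r) R} (hB : ∀ v, A *ᵥ v = 0 → ∃ c, v = B *ᵥ c)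
    {C : Matrix (Fin q) (Fin s) R} (hAC : A * C = 0) :
    ∃ D : Matrix (Fin r) (Fin s) R, C = B * D := by
  have hcols : ∀ j, ∃ c, Cᵀ j = B *ᵥ c := fun j =>
    hB _ (by rw [show A *ᵥ Cᵀ j = (A * C)ᵀ j from rfl, hAC]; rfl)
  choose c hc using hcols
  exact ⟨(of c)ᵀ, ext fun i j => congrFun (hc j) i⟩

theorem exists_eq_mul_of_vecMul_ker {A : Matrix (Fin p) (Fin q) R}
    {B : Matrix (Fin q) (Fin r) R} (hA : ∀ w, w ᵥ* B = 0 → ∃ u, w = u ᵥ* A)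
    {C : Matrix (Fin s) (Fin q) R} (hCB : C * B = 0) :
    ∃ D : Matrix (Fin s) (Fin p) R, C = D * A := by
  have hrows : ∀ i, ∃ u, C i = u ᵥ* A := fun i =>
    hA _ (by rw [← mul_apply_eq_vecMul, hCB]; rfl)
  choose u hu using hrows
  exact ⟨of u, funext hu⟩

end Matrix

theorem sol_of_left_nullspace_is_largest_parametrizable_subset
    {R : Type} [Ring R] {F : Type} [AddCommGroup F] [Module R F]
    (hF : Module.Injective R F)
    -- F is a cogenerator
    (hcogen : ∀ (M : Type) [AddCommGroup M] [Module R M],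
      (∃ m : M, m ≠ 0) → ∃ φ : M →ₗ[R] F, φ ≠ 0)
    {l' l l'' l''' : ℕ}
    (A : Matrix (Fin l') (Fin l) R)
    (B : Matrix (Fin l) (Fin l'') R)
    (A' : Matrix (Fin l''') (Fin l) R)
    -- B is a right nullspace of A
    (hAB : A * B = 0)
    (hBker : ∀ v : Fin l → R, A.mulVec v = 0 → ∃ c : Fin l'' → R, v = B.mulVec c)
    -- A' is a left nullspace of B
    (hA'B : A' * B = 0)
    (hA'ker : ∀ w : Fin l → R, Matrix.vecMul w B = 0 →
      ∃ u : Fin l''' → R, w = Matrix.vecMul u A') :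
    solSet (F := F) A' ⊆ solSet (F := F) A ∧
      ∀ (m : ℕ) (Bt : Matrix (Fin l) (Fin m) R),
        matImage (F := F) Bt ⊆ solSet (F := F) A →
          matImage (F := F) Bt ⊆ solSet (F := F) A' := by
  refine ⟨?_, fun m Bt hBt => ?_⟩
  · obtain ⟨U, rfl⟩ := Matrix.exists_eq_mul_of_vecMul_ker hA'ker hAB
    exact solSet_subset_solSet_mul U A'
  · have hABt : A * Bt = 0 := mul_eq_zero_of_matImage_subset_solSet hF hcogen hBt
    obtain ⟨C, rfl⟩ := Matrix.exists_eq_mul_of_mulVec_ker hBker hABt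
    have hA'Bt : A' * (B * C) = 0 := by rw [← Matrix.mul_assoc, hA'B, Matrix.zero_mul]
    exact matImage_subset_solSet_of_mul_eq_zero hA'Bt
end

section
/- Let R be a ring and F an injective left R-module that is also a cogenerator. Let A ∈ R^{l'×l}, let B ∈ R^{l×l''} be a right nullspace of A, and let A' ∈ R^{l'''×l} be a left nullspace of B. Then Sol_F(A) is parametrizable (i.e., Sol_F(A) = B̃ F^{m×1} for some matrix B̃ over R) if and only if every row of A' lies in the left row module R^{1×l'}·A generated by the rows of A, i.e., if and only if A' = M A for some matrix M ∈ R^{l'''×l'}; in that case B parametrizes Sol_F(A). -/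
/-- Composition of matrix actions. -/
lemma matVec_mul {R : Type} [Ring R] {F : Type} [AddCommGroup F] [Module R F]
    {p q r : ℕ} (A : Matrix (Fin p) (Fin q) R) (B : Matrix (Fin q) (Fin r) R)
    (g : Fin r → F) : matVec (A * B) g = matVec A (matVec B g) := by
  funext i
  simp only [matVec, Matrix.mul_apply, Finset.sum_smul, Finset.smul_sum, mul_smul]
  exact Finset.sum_comm

/-- Separation: an injective cogenerator separates points of any module. -/
lemma sep_point {R : Type} [Ring R] {F : Type} [AddCommGroup F] [Module R F]
    (hF : Module.Injective R F)
    (hcogen : ∀ (M : Type) [AddCommGroup M] [Module R M],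
      (∃ m : M, m ≠ 0) → ∃ φ : M →ₗ[R] F, φ ≠ 0)
    (M : Type) [AddCommGroup M] [Module R M] (m : M) (hm : m ≠ 0) :
    ∃ φ : M →ₗ[R] F, φ m ≠ 0 := by
  set N : Submodule R M := Submodule.span R {m} with hN
  have hmem : m ∈ N := Submodule.mem_span_singleton_self m
  have hne : ∃ x : N, x ≠ 0 := by
    refine ⟨⟨m, hmem⟩, fun h => hm ?_⟩
    exact congrArg Subtype.val h
  obtain ⟨ψ, hψ⟩ := hcogen N hne
  have hψm : ψ ⟨m, hmem⟩ ≠ 0 := by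
    intro h0
    apply hψ
    ext x
    obtain ⟨r, hr⟩ := Submodule.mem_span_singleton.mp x.2
    have hx : (x : N) = r • (⟨m, hmem⟩ : N) := by
      apply Subtype.ext
      simpa using hr.symm
    rw [hx, map_smul, h0, smul_zero]
    rfl
  obtain ⟨φ, hφ⟩ := hF.out N.subtype (Submodule.injective_subtype N) ψ
  refine ⟨φ, ?_⟩
  have hφm : φ m = ψ ⟨m, hmem⟩ := hφ ⟨m, hmem⟩
  rw [hφm]
  exact hψm

theorem parametrizable_iff_rows_of_A'_in_row_module_of_A
    {R : Type} [Ring R] {F : Type} [AddCommGroup F] [Module R F]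
    (hF : Module.Injective R F)
    -- F is a cogenerator
    (hcogen : ∀ (M : Type) [AddCommGroup M] [Module R M],
      (∃ m : M, m ≠ 0) → ∃ φ : M →ₗ[R] F, φ ≠ 0)
    {l' l l'' l''' : ℕ}
    (A : Matrix (Fin l') (Fin l) R)
    (B : Matrix (Fin l) (Fin l'') R)
    (A' : Matrix (Fin l''') (Fin l) R)
    -- B is a right nullspace of A
    (hAB : A * B = 0)
    (hBker : ∀ v : Fin l → R, A.mulVec v = 0 → ∃ c : Fin l'' → R, v = B.mulVec c)
    -- A' is a left nullspace of B
    (hA'B : A' * B = 0)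
    (hA'ker : ∀ w : Fin l → R, Matrix.vecMul w B = 0 →
      ∃ u : Fin l''' → R, w = Matrix.vecMul u A') :
    ((∃ (m : ℕ) (Bt : Matrix (Fin l) (Fin m) R), solSet (F := F) A = matImage (F := F) Bt) ↔
      ∃ M : Matrix (Fin l''') (Fin l') R, A' = M * A) ∧
    ((∃ M : Matrix (Fin l''') (Fin l') R, A' = M * A) →
      solSet (F := F) A = matImage (F := F) B) := by
  -- Part 2 first
  have part2 : (∃ M : Matrix (Fin l''') (Fin l') R, A' = M * A) →
      solSet (F := F) A = matImage (F := F) B := by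
    rintro ⟨M, hM⟩
    ext f
    constructor
    · intro hf
      have hf : matVec A f = 0 := hf
      -- the linear map θ : R^{1×l} → F, w ↦ ∑ w j • f j
      set θ : (Fin l → R) →ₗ[R] F :=
        { toFun := fun w => ∑ j, w j • f j
          map_add' := by
            intro w w'; simp [add_smul, Finset.sum_add_distrib]
          map_smul' := by
            intro r w; simp [mul_smul, Finset.smul_sum] } with hθ
      -- θ vanishes on ker (·B)
      have hker : LinearMap.ker (Matrix.vecMulLinear B) ≤ LinearMap.ker θ := by
        intro w hw
        simp only [LinearMap.mem_ker, Matrix.vecMulLinear_apply] at hw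
        obtain ⟨u, hu⟩ := hA'ker w hw
        have hA'f : matVec A' f = 0 := by
          rw [hM, matVec_mul, hf]
          funext i; simp [matVec]
        simp only [LinearMap.mem_ker, hθ, LinearMap.coe_mk, AddHom.coe_mk]
        have : ∑ j, w j • f j = ∑ i, u i • (matVec A' f i) := by
          subst hu
          simp only [Matrix.vecMul, dotProduct, matVec, Finset.sum_smul,
            Finset.smul_sum, mul_smul]
          exact Finset.sum_comm
        rw [this, hA'f]
        simp
      -- factor θ through ·B using injectivity of F
      set K := LinearMap.ker (Matrix.vecMulLinear B) with hK
      let θ' : ((Fin l → R) ⧸ K) →ₗ[R] F := K.liftQ θ hker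
      let ι : ((Fin l → R) ⧸ K) →ₗ[R] (Fin l'' → R) :=
        K.liftQ (Matrix.vecMulLinear B) le_rfl
      have hι : Function.Injective ι := by
        rw [← LinearMap.ker_eq_bot]
        exact Submodule.ker_liftQ_eq_bot K _ le_rfl le_rfl
      obtain ⟨χ, hχ⟩ := hF.out ι hι θ'
      have key : ∀ w : Fin l → R, χ (Matrix.vecMul w B) = θ w := by
        intro w
        have h1 : ι (Submodule.Quotient.mk w) = Matrix.vecMul w B := rfl
        have h2 : θ' (Submodule.Quotient.mk w) = θ w := rfl
        rw [← h1, hχ, h2]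
      refine ⟨fun k => χ (fun k' => if k = k' then 1 else 0), ?_⟩
      funext j
      have hw : Matrix.vecMul (fun j' => if j = j' then (1 : R) else 0) B = fun k => B j k := by
        funext k
        simp [Matrix.vecMul, dotProduct]
      have hθw : θ (fun j' => if j = j' then (1 : R) else 0) = f j := by
        simp [hθ]
      have := key (fun j' => if j = j' then (1 : R) else 0)
      rw [hw, hθw] at this
      have hrow : (fun k => B j k) = ∑ k, B j k • (fun k' => if k = k' then (1 : R) else 0) :=
        pi_eq_sum_univ _
      calc f j = χ (fun k => B j k) := this.symm
        _ = ∑ k, B j k • χ (fun k' => if k = k' then (1 : R) else 0) := by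
            rw [hrow, map_sum]; simp
        _ = matVec B (fun k => χ (fun k' => if k = k' then (1 : R) else 0)) j := rfl
    · rintro ⟨g, rfl⟩
      show matVec A (matVec B g) = 0
      rw [← matVec_mul, hAB]
      funext i; simp [matVec]
  refine ⟨⟨?_, fun h => ⟨l'', B, part2 h⟩⟩, part2⟩
  rintro ⟨m, Bt, hsol⟩
  -- A * Bt acts as zero on F, hence A * Bt = 0
  have hABtF : ∀ g : Fin m → F, matVec (A * Bt) g = 0 := by
    intro g
    rw [matVec_mul]
    have : matVec Bt g ∈ matImage (F := F) Bt := ⟨g, rfl⟩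
    rw [← hsol] at this
    exact this
  have hABt : A * Bt = 0 := by
    by_contra h
    have : ∃ i j, (A * Bt) i j ≠ 0 := by
      by_contra h'
      push_neg at h'
      exact h (by ext i j; simpa using h' i j)
    obtain ⟨i, j, hij⟩ := this
    obtain ⟨φ, hφ⟩ := sep_point hF hcogen R ((A * Bt) i j) hij
    have := congrFun (hABtF (Pi.single j (φ 1))) i
    simp only [matVec, Pi.zero_apply] at this
    rw [Finset.sum_eq_single j
      (fun k _ hk => by rw [Pi.single_eq_of_ne hk, smul_zero]) (by simp)] at this
    rw [Pi.single_eq_same, ← map_smul, smul_eq_mul, mul_one] at this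
    exact hφ this
  -- Bt = B * C for some C, hence A' * Bt = 0
  have hcols : ∀ k, ∃ c : Fin l'' → R, (fun j => Bt j k) = B.mulVec c := by
    intro k
    apply hBker
    funext i
    have := congrFun (congrFun hABt i) k
    simpa [Matrix.mul_apply, Matrix.mulVec, dotProduct] using
      congrFun (congrFun hABt i) k
  choose C hC using hcols
  have hBtE : Bt = B * (Matrix.of fun a b => C b a) := by
    ext j k
    have := congrFun (hC k) j
    simpa [Matrix.mulVec, dotProduct, Matrix.mul_apply] using this
  have hA'Bt : A' * Bt = 0 := by
    rw [hBtE, ← Matrix.mul_assoc, hA'B, Matrix.zero_mul]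
  -- solutions of A are killed by A'
  have hA'sol : ∀ f : Fin l → F, matVec A f = 0 → matVec A' f = 0 := by
    intro f hf
    have : f ∈ matImage (F := F) Bt := by rw [← hsol]; exact hf
    obtain ⟨g, rfl⟩ := this
    rw [← matVec_mul, hA'Bt]
    funext i; simp [matVec]
  -- each row of A' lies in the row module of A
  have hrow : ∀ i, ∃ u : Fin l' → R, (fun j => A' i j) = Matrix.vecMul u A := by
    intro i
    by_contra h
    push_neg at h
    set S := LinearMap.range (Matrix.vecMulLinear A) with hS
    have hmem : (fun j => A' i j) ∉ S := by
      rintro ⟨u, hu⟩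
      exact h u hu.symm
    have hne : S.mkQ (fun j => A' i j) ≠ 0 := by
      rw [Submodule.mkQ_apply]
      intro h0
      exact hmem ((Submodule.Quotient.mk_eq_zero S).mp h0)
    obtain ⟨Φ, hΦ⟩ := sep_point hF hcogen ((Fin l → R) ⧸ S) _ hne
    set ΦQ : (Fin l → R) →ₗ[R] F := Φ.comp S.mkQ with hΦQ
    have hΦQ' : ΦQ (fun j => A' i j) ≠ 0 := hΦ
    set f : Fin l → F := fun j =>
      ΦQ (fun j' => if j = j' then (1 : R) else 0) with hfdef
    have hsum : ∀ (v : Fin l → R), ∑ j, v j • f j = ΦQ v := by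
      intro v
      conv_rhs => rw [pi_eq_sum_univ v]
      rw [map_sum]
      simp only [map_smul, hfdef]
    have hAf : matVec A f = 0 := by
      funext k
      show ∑ j, A k j • f j = 0
      rw [hsum (fun j => A k j)]
      have hSmem : (fun j => A k j) ∈ S := by
        refine ⟨fun k' => if k = k' then 1 else 0, ?_⟩
        funext j
        simp [Matrix.vecMul, dotProduct]
      have hz : S.mkQ (fun j => A k j) = 0 := by
        rw [Submodule.mkQ_apply]
        exact (Submodule.Quotient.mk_eq_zero S).mpr hSmem
      rw [hΦQ, LinearMap.comp_apply, hz, map_zero]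
    have hA'f := congrFun (hA'sol f hAf) i
    simp only [matVec, Pi.zero_apply] at hA'f
    rw [hsum (fun j => A' i j)] at hA'f
    exact hΦQ' hA'f
  choose u hu using hrow
  refine ⟨fun i => u i, ?_⟩
  ext i j
  have := congrFun (hu i) j
  show A' i j = ∑ x, u i x * A x j
  simpa [Matrix.mul_apply, Matrix.vecMul, dotProduct] using this
end

section
/- (Disjointness of Janet cones.) Let n ≥ 1 and let A ⊂ (ℤ_{≥0})^n be a finite set of multi-indices. For α = (α_1,…,α_n) ∈ A call an index k ∈ {1,…,n} multiplicative for α (with respect to A) if α_k = max{ α'_k : α' ∈ A, α'_1 = α_1, …, α'_{k−1} = α_{k−1} }. Define the Janet cone of α as C(α) := { α + β : β ∈ (ℤ_{≥0})^n with β_k = 0 for every index k that is not multiplicative for α }. Then for any two distinct α, α' ∈ A the cones C(α) and C(α') are disjoint. -/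
/-
Order the elements of `A` lexicographically and let `α < α'`, first differing at `k`. A common
point `γ` of both cones satisfies `γ_k ≥ α'_k > α_k`, so the cone of `α` extends in direction `k`
and `k` is multiplicative for `α`. But `α' ∈ A` agrees with `α` before `k`, so multiplicativity
forces `α'_k ≤ α_k`, a contradiction.
-/

/-- The index `k` is multiplicative for the multi-index `α` with respect to the finite
set `A` of multi-indices (Janet division): `α_k` is maximal among all `α' ∈ A` agreeing
with `α` in the positions before `k`. -/
def IsMultiplicative {n : ℕ} (A : Finset (Fin n → ℕ)) (α : Fin n → ℕ) (k : Fin n) :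
    Prop :=
  α k = (A.filter fun α' => ∀ j : Fin n, j < k → α' j = α j).sup fun α' => α' k

/-- The Janet cone of `α` with respect to `A`: all shifts of `α` in multiplicative
directions only. -/
def janetCone {n : ℕ} (A : Finset (Fin n → ℕ)) (α : Fin n → ℕ) : Set (Fin n → ℕ) :=
  {γ | ∃ β : Fin n → ℕ, γ = α + β ∧ ∀ k : Fin n, ¬ IsMultiplicative A α k → β k = 0}

section Janet

variable {n : ℕ} {A : Finset (Fin n → ℕ)} {α α' γ : Fin n → ℕ} {k : Fin n}

theorem IsMultiplicative.apply_le (hk : IsMultiplicative A α k) (hα' : α' ∈ A)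
    (hpre : ∀ j < k, α' j = α j) : α' k ≤ α k := by
  rw [hk]
  exact Finset.le_sup (f := fun x : Fin n → ℕ => x k) (Finset.mem_filter.mpr ⟨hα', hpre⟩)

theorem le_of_mem_janetCone (hγ : γ ∈ janetCone A α) : α ≤ γ := by
  obtain ⟨β, rfl, -⟩ := hγ
  exact fun i => Nat.le_add_right _ _

theorem isMultiplicative_of_mem_janetCone (hγ : γ ∈ janetCone A α) (hk : α k < γ k) :
    IsMultiplicative A α k := by
  obtain ⟨β, rfl, hβ⟩ := hγ
  by_contra hmul
  simp [hβ k hmul] at hk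

theorem notMem_janetCone_of_toLex_lt (hα' : α' ∈ A) (hlt : toLex α < toLex α')
    (hγ : γ ∈ janetCone A α) : γ ∉ janetCone A α' := by
  intro hγ'
  obtain ⟨k, hpre, hk⟩ := hlt
  have hmul : IsMultiplicative A α k :=
    isMultiplicative_of_mem_janetCone hγ (hk.trans_le (le_of_mem_janetCone hγ' k))
  exact (hmul.apply_le hα' fun j hj => (hpre j hj).symm).not_gt hk

end Janet

theorem janetCone_disjoint_general (n : ℕ) (A : Finset (Fin n → ℕ))
    (α α' : Fin n → ℕ) (hα : α ∈ A) (hα' : α' ∈ A) (hne : α ≠ α') :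
    janetCone A α ∩ janetCone A α' = ∅ := by
  refine Set.eq_empty_iff_forall_notMem.mpr fun γ ⟨hγ, hγ'⟩ => ?_
  rcases lt_or_gt_of_ne (toLex.injective.ne hne) with hlt | hlt
  · exact notMem_janetCone_of_toLex_lt hα' hlt hγ hγ'
  · exact notMem_janetCone_of_toLex_lt hα hlt hγ' hγ

/-- **Disjointness of Janet cones**: the Janet cones of two distinct elements of a
finite set of multi-indices are disjoint. -/
theorem janetCone_disjoint (n : ℕ) (hn : 1 ≤ n) (A : Finset (Fin n → ℕ))
    (α α' : Fin n → ℕ) (hα : α ∈ A) (hα' : α' ∈ A) (hne : α ≠ α') :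
    janetCone A α ∩ janetCone A α' = ∅ :=
  janetCone_disjoint_general n A α α' hα hα' hne
end
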